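/- The usual Tamari lattice on Dyck paths of size n is partitioned by the Type function: the fibers I(v) = {P : Type(P) = v}, over all 2^{n−1} words v in {N,E}^{n−1}, are intervals of the Tamari lattice. -/

import Mathlib

/-!
Read a word as a lattice path (`true` up, `false` down). A rotation `A d B C ↦ A B d C` can
change the type only in the letter after the last up step of `A`, and only from `N` to `E`
(`false` to `true`): the type is monotone for the componentwise order, so every path between two
paths of type `v` has type `v`. Conversely, a path of type `v` other than `typeMax 0 v` has a
factor `ddu`, and moving its second `d` past the Dyck factor starting at the `u` keeps the type;
a path of type `v` other than `typeMin 0 v` has a valley above height `0`, and the inverse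
rotation there keeps the type. Rotations increase `suffixWeight true` and decrease
`suffixWeight false`, so these moves lead from any path of type `v` up to `typeMax 0 v` and
down to `typeMin 0 v`.
-/

/-- A Dyck word: `true` is an up step `u`, `false` is a down step `d`. -/
def IsDyck (w : List Bool) : Prop :=
  w.count true = w.count false ∧ ∀ k, (w.take k).count false ≤ (w.take k).count true

/-- Position (0-based index) of the `i`-th (1-based) up step of `w`. -/
noncomputable def upPos (w : List Bool) (i : ℕ) : ℕ :=
  sInf {j | w.getD j false = true ∧ (w.take (j + 1)).count true = i}

/-- Position of the down step matching the up step at position `k`: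
the first later down step such that the letters strictly in between form a Dyck word. -/
noncomputable def matchIdx (w : List Bool) (k : ℕ) : ℕ :=
  sInf {m | k < m ∧ w.getD m true = false ∧ IsDyck ((w.drop (k + 1)).take (m - (k + 1)))}

/-- The distance function `D_w(i)`: number of letters between the `i`-th up step and its
matching down step, plus one. -/
noncomputable def distFn (w : List Bool) (i : ℕ) : ℕ :=
  matchIdx w (upPos w i) - upPos w i

/-- One rotation step of the Tamari order on Dyck words: a factor `d · B` (with `B` a
nonempty Dyck word) is replaced by `B · d`. -/
def TamariStep (P Q : List Bool) : Prop :=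
  ∃ A B C : List Bool, IsDyck B ∧ B ≠ [] ∧
    P = A ++ false :: (B ++ C) ∧ Q = A ++ (B ++ false :: C)

/-- The Tamari order on Dyck words: reflexive-transitive closure of rotation steps. -/
def TamariLe : List Bool → List Bool → Prop := Relation.ReflTransGen TamariStep
/-- The type of a Dyck word `w` of size `n`: the word of length `n - 1` over `{N, E}`
(encoded with `true = E`, `false = N`) whose `k`-th letter is `E` iff the letter following
the `k`-th up step of `w` is an up step. -/
noncomputable def typeWord (w : List Bool) : List Bool :=
  (List.range (w.count true - 1)).map (fun k => w.getD (upPos w (k + 1) + 1) false)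

/-- A synchronized interval: a pair of Dyck words of the same size, comparable in the
Tamari order, and with the same type. -/
def Sync (P Q : List Bool) : Prop :=
  IsDyck P ∧ IsDyck Q ∧ P.length = Q.length ∧ TamariLe P Q ∧ typeWord P = typeWord Q

theorem List.Forall₂.le_trans {α : Type*} [Preorder α] {l₁ l₂ l₃ : List α}
    (h₁₂ : List.Forall₂ (· ≤ ·) l₁ l₂) (h₂₃ : List.Forall₂ (· ≤ ·) l₂ l₃) :
    List.Forall₂ (· ≤ ·) l₁ l₃ := by
  induction h₁₂ generalizing l₃ with
  | nil => exact h₂₃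
  | cons hab _ ih =>
    cases h₂₃ with
    | cons hbc h => exact .cons (hab.trans hbc) (ih h)

theorem List.Forall₂.antisymm {α : Type*} [PartialOrder α] {l₁ l₂ : List α}
    (h₁₂ : List.Forall₂ (· ≤ ·) l₁ l₂) (h₂₁ : List.Forall₂ (· ≤ ·) l₂ l₁) : l₁ = l₂ := by
  induction h₁₂ with
  | nil => rfl
  | cons hab _ ih =>
    cases h₂₁ with
    | cons hba h => rw [le_antisymm hab hba, ih h]

theorem Relation.reflTransGen_of_exists_decreasing_step {α : Type*} {r : α → α → Prop}
    {S : Set α} {b : α} (g : α → ℕ) (hstep : ∀ x ∈ S, x ≠ b → ∃ y ∈ S, r x y ∧ g y < g x) :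
    ∀ x ∈ S, Relation.ReflTransGen r x b := by
  intro x
  induction hgx : g x using Nat.strong_induction_on generalizing x with
  | _ k ih =>
    intro hx
    by_cases hxb : x = b
    · exact hxb ▸ .refl
    obtain ⟨y, hy, hxy, hgy⟩ := hstep x hx hxb
    exact .head hxy (ih (g y) (hgx ▸ hgy) y rfl hy)

section

open List

/-- The path `w`, started at height `h`, stays at nonnegative height and ends at height `h'`. -/
def IsWalk : ℕ → List Bool → ℕ → Prop
  | h, [], h' => h = h'
  | h, true :: w, h' => IsWalk (h + 1) w h'
  | 0, false :: _, _ => False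
  | h + 1, false :: w, h' => IsWalk h w h'

@[simp] theorem isWalk_nil {h h' : ℕ} : IsWalk h [] h' ↔ h = h' := Iff.rfl

@[simp] theorem isWalk_cons_true {h h' : ℕ} {w : List Bool} :
    IsWalk h (true :: w) h' ↔ IsWalk (h + 1) w h' := Iff.rfl

@[simp] theorem isWalk_zero_cons_false {h' : ℕ} {w : List Bool} :
    ¬ IsWalk 0 (false :: w) h' := id

@[simp] theorem isWalk_succ_cons_false {h h' : ℕ} {w : List Bool} :
    IsWalk (h + 1) (false :: w) h' ↔ IsWalk h w h' := Iff.rfl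

theorem isWalk_iff_count {h h' : ℕ} {w : List Bool} :
    IsWalk h w h' ↔ w.count true + h = w.count false + h' ∧
      ∀ k, (w.take k).count false ≤ (w.take k).count true + h := by
  induction w generalizing h with
  | nil => simp [eq_comm]
  | cons x w ih =>
    rw [← Nat.and_forall_add_one]
    cases x
    · cases h with
      | zero => simpa using fun _ => ⟨0, by simp⟩
      | succ h => simpa [ih] using and_congr (by omega) (forall_congr' fun k => by omega)
    · simpa [ih] using and_congr (by omega) (forall_congr' fun k => by omega)

theorem isDyck_iff_isWalk {w : List Bool} : IsDyck w ↔ IsWalk 0 w 0 := by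
  simp [isWalk_iff_count, IsDyck]

theorem isWalk_append {h h'' : ℕ} {X Y : List Bool} :
    IsWalk h (X ++ Y) h'' ↔ ∃ h', IsWalk h X h' ∧ IsWalk h' Y h'' := by
  induction X generalizing h with
  | nil => simp
  | cons x X ih =>
    cases x
    · cases h <;> simp [ih]
    · simp [ih]

theorem IsWalk.count_eq {h h' : ℕ} {w : List Bool} (hw : IsWalk h w h') :
    w.count true + h = w.count false + h' :=
  (isWalk_iff_count.mp hw).1

theorem IsWalk.lift {h h' : ℕ} {w : List Bool} (hw : IsWalk h w h') (j : ℕ) :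
    IsWalk (h + j) w (h' + j) := by
  induction w generalizing h with
  | nil => simp_all
  | cons x w ih =>
    cases x
    · cases h with
      | zero => exact hw.elim
      | succ h => simpa [Nat.add_right_comm h 1 j] using ih hw
    · simpa [Nat.add_right_comm h 1 j] using ih hw

@[simp] theorem isWalk_replicate_false {h h' q : ℕ} :
    IsWalk h (replicate q false) h' ↔ h = q + h' := by
  induction q generalizing h with
  | zero => simp
  | succ q ih =>
    cases h
    · simp only [replicate_succ, isWalk_zero_cons_false, false_iff]
      omega
    · simp only [replicate_succ, isWalk_succ_cons_false, ih]
      omega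

theorem IsWalk.right_unique {h h₁ h₂ : ℕ} {w : List Bool} (h₁w : IsWalk h w h₁)
    (h₂w : IsWalk h w h₂) : h₁ = h₂ := by
  have := h₁w.count_eq
  have := h₂w.count_eq
  omega

theorem IsWalk.isWalk_iff_eq {B : List Bool} (hB : IsWalk 0 B 0) {h h' : ℕ} :
    IsWalk h B h' ↔ h = h' := by
  have hBh : IsWalk h B h := by simpa using hB.lift h
  exact ⟨hBh.right_unique, fun hh => hh ▸ hBh⟩

theorem IsWalk.exists_eq_concat_false {B : List Bool} (hB : IsWalk 0 B 0) (hne : B ≠ []) :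
    ∃ B', B = B' ++ [false] := by
  obtain rfl | ⟨B', b, rfl⟩ := B.eq_nil_or_concat
  · exact absurd rfl hne
  rw [concat_eq_append] at hB ⊢
  cases b
  · exact ⟨B', rfl⟩
  · simp [isWalk_append] at hB

theorem IsWalk.exists_first_passage {h h' : ℕ} {R : List Bool} (hR : IsWalk (h + 1) R h')
    (hh' : h' ≤ h) : ∃ B C, R = B ++ false :: C ∧ IsWalk 0 B 0 ∧ IsWalk h C h' := by
  induction hn : R.length using Nat.strong_induction_on generalizing R h with
  | _ n ih =>
  match R with
  | [] => simp only [isWalk_nil] at hR; omega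
  | false :: C => exact ⟨[], C, rfl, rfl, hR⟩
  | true :: R =>
    -- after an initial up step, pass first down to height `h + 1`, then down to `h`
    obtain ⟨B₁, C₁, rfl, hB₁, hC₁⟩ :=
      ih _ (by simp only [length_cons] at hn; omega) (h := h + 1) hR (by omega) rfl
    obtain ⟨B₂, C₂, rfl, hB₂, hC₂⟩ :=
      ih _ (by simp only [length_cons, length_append] at hn; omega) hC₁ hh' rfl
    refine ⟨true :: (B₁ ++ false :: B₂), C₂, by simp, ?_, hC₂⟩
    simp only [isWalk_cons_true, isWalk_append]
    exact ⟨1, by simpa using hB₁.lift 1, hB₂⟩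

theorem isWalk_false_cons_append_iff {B C : List Bool} (hB : IsWalk 0 B 0) {h h' : ℕ} :
    IsWalk h (false :: (B ++ C)) h' ↔ IsWalk h (B ++ false :: C) h' := by
  cases h <;> simp [isWalk_append, hB.isWalk_iff_eq]

theorem IsWalk.one_le_count_true {B : List Bool} (hB : IsWalk 0 B 0) (hne : B ≠ []) :
    1 ≤ B.count true := by
  have := hB.count_eq
  have := count_true_add_count_false B
  have := length_pos_iff.mpr hne
  omega

theorem IsWalk.exists_eq_true_cons {P : List Bool} {h' : ℕ} (hP : IsWalk 0 P h')
    (hne : P ≠ []) : ∃ S, P = true :: S := by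
  obtain ⟨_ | _, S, rfl⟩ := exists_cons_of_ne_nil hne
  · simp at hP
  · exact ⟨S, rfl⟩

theorem TamariStep.isDyck_iff {P Q : List Bool} (h : TamariStep P Q) : IsDyck P ↔ IsDyck Q := by
  obtain ⟨A, B, C, hB, -, rfl, rfl⟩ := h
  simp only [isDyck_iff_isWalk, isWalk_append,
    isWalk_false_cons_append_iff (isDyck_iff_isWalk.mp hB)]

def suffixWeight (b : Bool) : List Bool → ℕ
  | [] => 0
  | x :: w => (if x = b then w.length + 1 else 0) + suffixWeight b w

theorem suffixWeight_append (b : Bool) (X Y : List Bool) :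
    suffixWeight b (X ++ Y) = suffixWeight b X + X.count b * Y.length + suffixWeight b Y := by
  induction X with
  | nil => simp [suffixWeight]
  | cons x X ih =>
    by_cases hx : x = b
    · simp only [cons_append, suffixWeight, hx, if_true, length_append, ih, count_cons_self]
      ring
    · simp [suffixWeight, ih, hx]

theorem TamariStep.suffixWeight_lt {P Q : List Bool} (h : TamariStep P Q) :
    suffixWeight true P < suffixWeight true Q ∧ suffixWeight false Q < suffixWeight false P := by
  obtain ⟨A, B, C, hB, hne, rfl, rfl⟩ := h
  have hct := (isDyck_iff_isWalk.mp hB).one_le_count_true hne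
  have hcf := (isDyck_iff_isWalk.mp hB).count_eq
  have hlen := count_true_add_count_false B
  have htrue : suffixWeight true (A ++ (B ++ false :: C)) =
      suffixWeight true (A ++ false :: (B ++ C)) + B.count true := by
    simp only [suffixWeight_append, length_append, length_cons, suffixWeight,
      Bool.false_eq_true, if_false, zero_add]
    ring
  have hfalse : suffixWeight false (A ++ false :: (B ++ C)) =
      suffixWeight false (A ++ (B ++ false :: C)) + B.count true := by
    simp only [suffixWeight_append, length_cons, length_append, suffixWeight, if_true]
    nlinarith
  omega

/-- `upFollowers w c` lists, for each up step of `w`, the letter that follows it, where `c`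
stands for the letter following `w`. -/
def upFollowers : List Bool → Bool → List Bool
  | [], _ => []
  | true :: w, c => w.headD c :: upFollowers w c
  | false :: w, c => upFollowers w c

@[simp] theorem upFollowers_cons_true (w : List Bool) (c : Bool) :
    upFollowers (true :: w) c = w.headD c :: upFollowers w c := rfl

@[simp] theorem upFollowers_cons_false (w : List Bool) (c : Bool) :
    upFollowers (false :: w) c = upFollowers w c := rfl

@[simp] theorem length_upFollowers (w : List Bool) (c : Bool) :
    (upFollowers w c).length = w.count true := by
  induction w with
  | nil => rfl
  | cons x w ih => cases x <;> simp [ih]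

theorem upFollowers_append (X Y : List Bool) (c : Bool) :
    upFollowers (X ++ Y) c = upFollowers X (Y.headD c) ++ upFollowers Y c := by
  induction X with
  | nil => rfl
  | cons x X ih =>
    cases x
    · simpa using ih
    · rw [cons_append, upFollowers_cons_true, ih]
      cases X <;> rfl

@[simp] theorem upFollowers_replicate_false (q : ℕ) (c : Bool) :
    upFollowers (replicate q false) c = [] := by
  induction q with
  | zero => rfl
  | succ q ih => simpa [replicate_succ] using ih

@[simp] theorem upFollowers_replicate_false_append (q : ℕ) (w : List Bool) (c : Bool) :
    upFollowers (replicate q false ++ w) c = upFollowers w c := by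
  simp [upFollowers_append]

theorem upFollowers_concat_false_append (X Y : List Bool) (c : Bool) :
    upFollowers (X ++ false :: Y) c = upFollowers X false ++ upFollowers Y c := by
  simp [upFollowers_append]

theorem upFollowers_mono (w : List Bool) {c c' : Bool} (hc : c ≤ c') :
    Forall₂ (· ≤ ·) (upFollowers w c) (upFollowers w c') := by
  induction w with
  | nil => exact .nil
  | cons x w ih =>
    cases x
    · exact ih
    · cases w
      · exact .cons hc ih
      · exact .cons le_rfl ih

/-- The last up step of a word is never followed by an up step. -/
theorem exists_upFollowers_false_eq_concat {w : List Bool} (hw : 1 ≤ w.count true) :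
    ∃ L, upFollowers w false = L ++ [false] := by
  induction w with
  | nil => simp at hw
  | cons x w ih =>
    cases x
    · exact ih (by simpa using hw)
    · by_cases hw' : 1 ≤ w.count true
      · obtain ⟨L, hL⟩ := ih hw'
        exact ⟨w.headD false :: L, by simp [hL]⟩
      · have hnil : upFollowers w false = [] :=
          eq_nil_of_length_eq_zero (by rw [length_upFollowers]; omega)
        have hhead : w.headD false = false := by
          cases w with
          | nil => rfl
          | cons y w => cases y <;> simp_all
        exact ⟨[], by rw [upFollowers_cons_true, hnil, hhead]; rfl⟩

theorem count_true_take_succ_of_getD {w : List Bool} {j : ℕ} (hj : w.getD j false = true) :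
    (w.take (j + 1)).count true = (w.take j).count true + 1 := by
  rw [getD_eq_getElem?_getD] at hj
  rw [take_add_one, count_append]
  cases h : w[j]? with
  | none => simp [h] at hj
  | some b => simp_all

theorem upPos_eq {w : List Bool} {i j : ℕ} (hj : w.getD j false = true)
    (hc : (w.take (j + 1)).count true = i) : upPos w i = j := by
  refine le_antisymm (Nat.sInf_le ⟨hj, hc⟩) (le_csInf ⟨j, hj, hc⟩ ?_)
  rintro j' ⟨hj', hc'⟩
  by_contra! hlt
  have := (take_prefix_take_left (l := w) (show j' + 1 ≤ j by omega)).count_le true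
  have := count_true_take_succ_of_getD hj
  omega

theorem exists_getD_eq_true_count_take {w : List Bool} {i : ℕ} (h1 : 1 ≤ i)
    (h2 : i ≤ w.count true) : ∃ j, w.getD j false = true ∧ (w.take (j + 1)).count true = i := by
  induction w generalizing i with
  | nil => simp only [count_nil] at h2; omega
  | cons x w ih =>
    cases x
    · obtain ⟨j, hj, hc⟩ := ih h1 (by simpa using h2)
      exact ⟨j + 1, by simpa using hj, by simpa using hc⟩
    · rcases (show i = 1 ∨ 2 ≤ i by omega) with rfl | hi
      · exact ⟨0, rfl, by simp⟩
      · obtain ⟨j, hj, hc⟩ :=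
          ih (i := i - 1) (by omega) (by simp only [count_cons_self] at h2; omega)
        exact ⟨j + 1, by simpa using hj, by simp only [take_succ_cons, count_cons_self, hc]; omega⟩

theorem upPos_cons_true {w : List Bool} {i : ℕ} (h1 : 1 ≤ i) (h2 : i ≤ w.count true) :
    upPos (true :: w) (i + 1) = upPos w i + 1 := by
  obtain ⟨j, hj, hc⟩ := exists_getD_eq_true_count_take h1 h2
  rw [upPos_eq hj hc]
  exact upPos_eq (by simpa using hj) (by simp [hc])

theorem upPos_cons_false {w : List Bool} {i : ℕ} (h1 : 1 ≤ i) (h2 : i ≤ w.count true) :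
    upPos (false :: w) i = upPos w i + 1 := by
  obtain ⟨j, hj, hc⟩ := exists_getD_eq_true_count_take h1 h2
  rw [upPos_eq hj hc]
  exact upPos_eq (by simpa using hj) (by simpa using hc)

theorem upFollowers_false_eq_map (w : List Bool) :
    upFollowers w false =
      (range (w.count true)).map fun k => w.getD (upPos w (k + 1) + 1) false := by
  induction w with
  | nil => rfl
  | cons x w ih =>
    cases x
    · rw [upFollowers_cons_false, ih, count_cons_of_ne (by decide)]
      refine map_congr_left fun k hk => ?_
      rw [upPos_cons_false (by omega) (by simpa using hk)]
      rfl
    · rw [upFollowers_cons_true, ih, count_cons_self, range_succ_eq_map, map_cons, map_map]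
      congr 1
      · rw [upPos_eq (j := 0) rfl (by simp)]
        cases w <;> rfl
      · refine map_congr_left fun k hk => ?_
        rw [Function.comp_apply, upPos_cons_true (by omega) (by simpa using hk)]
        rfl

theorem typeWord_eq_dropLast (w : List Bool) : typeWord w = (upFollowers w false).dropLast := by
  rw [upFollowers_false_eq_map, typeWord, ← map_dropLast]
  congr 1
  cases w.count true <;> simp [range_succ]

theorem upFollowers_false_eq_typeWord_append {w : List Bool} (hw : 1 ≤ w.count true) :
    upFollowers w false = typeWord w ++ [false] := by
  obtain ⟨L, hL⟩ := exists_upFollowers_false_eq_concat hw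
  rw [typeWord_eq_dropLast, hL, dropLast_concat]

theorem typeWord_eq_iff {w v : List Bool} (hw : 1 ≤ w.count true) :
    typeWord w = v ↔ upFollowers w false = v ++ [false] := by
  rw [upFollowers_false_eq_typeWord_append hw, append_left_inj]

theorem IsWalk.upFollowers_append_false_cons {B : List Bool} (hB : IsWalk 0 B 0) (hne : B ≠ [])
    (C : List Bool) (c : Bool) : upFollowers (B ++ false :: C) c = upFollowers (B ++ C) c := by
  obtain ⟨B, rfl⟩ := hB.exists_eq_concat_false hne
  simp only [append_assoc, cons_append, nil_append, upFollowers_concat_false_append]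
  rfl

theorem TamariStep.upFollowers_le {P Q : List Bool} (h : TamariStep P Q) (c : Bool) :
    Forall₂ (· ≤ ·) (upFollowers P c) (upFollowers Q c) := by
  obtain ⟨A, B, C, hB, hne, rfl, rfl⟩ := h
  rw [upFollowers_concat_false_append, upFollowers_append A,
    (isDyck_iff_isWalk.mp hB).upFollowers_append_false_cons hne]
  exact rel_append (upFollowers_mono A (Bool.false_le _)) (forall₂_refl _)

theorem TamariLe.upFollowers_le {P Q : List Bool} (h : TamariLe P Q) (c : Bool) :
    Forall₂ (· ≤ ·) (upFollowers P c) (upFollowers Q c) := by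
  induction h with
  | refl => exact forall₂_refl _
  | tail _ hstep ih => exact ih.le_trans (hstep.upFollowers_le c)

theorem IsWalk.upFollowers_rotate_eq {B : List Bool} (hB : IsWalk 0 B 0) (hne : B ≠ [])
    (A C : List Bool) (c : Bool) :
    upFollowers ((A ++ [false]) ++ false :: (B ++ C)) c =
      upFollowers ((A ++ [false]) ++ (B ++ false :: C)) c := by
  simp only [append_assoc, cons_append, nil_append, upFollowers_concat_false_append,
    upFollowers_cons_false, hB.upFollowers_append_false_cons hne]

/-- A path of type `v` from height `h` to `0` in which every descent but the last has length
one. -/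
def typeMax : ℕ → List Bool → List Bool
  | h, [] => true :: replicate (h + 1) false
  | h, true :: v => true :: typeMax (h + 1) v
  | h, false :: v => true :: false :: typeMax h v

/-- A path of type `v` from height `h` to `0` in which every descent goes down to height `0`. -/
def typeMin : ℕ → List Bool → List Bool
  | h, [] => true :: replicate (h + 1) false
  | h, true :: v => true :: typeMin (h + 1) v
  | h, false :: v => true :: (replicate (h + 1) false ++ typeMin 0 v)

@[simp] theorem head?_typeMax (h : ℕ) (v : List Bool) : (typeMax h v).head? = some true := by
  cases v with
  | nil => rfl
  | cons x v => cases x <;> rfl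

@[simp] theorem head?_typeMin (h : ℕ) (v : List Bool) : (typeMin h v).head? = some true := by
  cases v with
  | nil => rfl
  | cons x v => cases x <;> rfl

theorem isWalk_typeMax (h : ℕ) (v : List Bool) : IsWalk h (typeMax h v) 0 := by
  induction v generalizing h with
  | nil => simp [typeMax]
  | cons x v ih => cases x <;> simpa [typeMax] using ih _

theorem isWalk_typeMin (h : ℕ) (v : List Bool) : IsWalk h (typeMin h v) 0 := by
  induction v generalizing h with
  | nil => simp [typeMin]
  | cons x v ih => cases x <;> simp [typeMin, isWalk_append, ih]

theorem upFollowers_typeMax (h : ℕ) (v : List Bool) :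
    upFollowers (typeMax h v) false = v ++ [false] := by
  induction v generalizing h with
  | nil => simp [typeMax, replicate_succ]
  | cons x v ih => cases x <;> simp [typeMax, ih]

theorem upFollowers_typeMin (h : ℕ) (v : List Bool) :
    upFollowers (typeMin h v) false = v ++ [false] := by
  induction v generalizing h with
  | nil => simp [typeMin, replicate_succ]
  | cons x v ih => cases x <;> simp [typeMin, ih, replicate_succ]

theorem IsWalk.eq_replicate_of_upFollowers_eq_nil {h : ℕ} {S : List Bool} (hS : IsWalk h S 0)
    {c : Bool} (hS0 : upFollowers S c = []) : S = replicate h false := by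
  have hct : S.count true = 0 := by simpa using congrArg length hS0
  have hrep : S = replicate S.length false :=
    eq_replicate_iff.mpr ⟨rfl, fun b hb => by
      cases b
      · rfl
      · exact absurd (count_pos_iff.mpr hb) (by omega)⟩
  obtain ⟨n, rfl⟩ : ∃ n, S = replicate n false := ⟨_, hrep⟩
  obtain rfl : h = n := by simpa using hS
  rfl

theorem true_mem_of_upFollowers_eq_append {S v : List Bool} {c : Bool}
    (hv : upFollowers S c = v ++ [false]) : true ∈ S := by
  have := congrArg length hv
  simp only [length_upFollowers, length_append, length_singleton] at this
  exact count_pos_iff.mp (by omega)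

theorem infix_ddu_of_true_mem {w : List Bool} (hw : true ∈ w) :
    [false, false, true] <:+: false :: false :: w := by
  induction w with
  | nil => simp at hw
  | cons x w ih =>
    cases x
    · exact (ih (by simpa using hw)).trans (suffix_cons _ _).isInfix
    · exact (prefix_append [false, false, true] w).isInfix

theorem eq_typeMax {h : ℕ} {v S : List Bool} (hS : IsWalk (h + 1) S 0)
    (hv : upFollowers (true :: S) false = v ++ [false])
    (hddu : ¬ [false, false, true] <:+: true :: S) : true :: S = typeMax h v := by
  induction v generalizing h S with
  | nil =>
    rw [hS.eq_replicate_of_upFollowers_eq_nil (c := false) (cons.inj hv).2]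
    rfl
  | cons x v ih =>
    simp only [upFollowers_cons_true, cons_append, cons.injEq] at hv
    obtain ⟨hx, hv⟩ := hv
    obtain ⟨y, S, rfl⟩ :=
      exists_cons_of_ne_nil (ne_nil_of_mem (true_mem_of_upFollowers_eq_append hv))
    obtain rfl : y = x := by simpa using hx
    cases y
    · rw [upFollowers_cons_false] at hv
      obtain ⟨z, S, rfl⟩ :=
        exists_cons_of_ne_nil (ne_nil_of_mem (true_mem_of_upFollowers_eq_append hv))
      cases z
      · exact absurd (infix_cons (infix_ddu_of_true_mem
          (true_mem_of_upFollowers_eq_append (c := false) (by simpa using hv)))) hddu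
      · rw [typeMax, ih (S := S) (by simpa using hS) hv
          (fun hd => hddu (infix_cons (infix_cons hd)))]
    · rw [typeMax, ih (S := S) (by simpa using hS) hv (fun hd => hddu (infix_cons hd))]

/-- `w`, read from height `h`, has a valley (a factor `du`) strictly above height `0`. -/
def HasRaisedValley (h : ℕ) (w : List Bool) : Prop :=
  ∃ X Y k, w = X ++ false :: true :: Y ∧ IsWalk h (X ++ [false]) (k + 1)

theorem HasRaisedValley.append_left {h h' : ℕ} {X Y : List Bool} (hX : IsWalk h X h')
    (hY : HasRaisedValley h' Y) : HasRaisedValley h (X ++ Y) := by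
  obtain ⟨X', Y', k, rfl, hX'⟩ := hY
  exact ⟨X ++ X', Y', k, by simp, by rw [append_assoc, isWalk_append]; exact ⟨h', hX, hX'⟩⟩

theorem exists_eq_replicate_false_append_true_cons {w : List Bool} (hw : true ∈ w) :
    ∃ q w', w = replicate q false ++ true :: w' := by
  induction w with
  | nil => simp at hw
  | cons x w ih =>
    cases x
    · obtain ⟨q, w', rfl⟩ := ih (by simpa using hw)
      exact ⟨q + 1, w', rfl⟩
    · exact ⟨0, w, rfl⟩

theorem eq_typeMin {h : ℕ} {v S : List Bool} (hS : IsWalk (h + 1) S 0)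
    (hv : upFollowers (true :: S) false = v ++ [false])
    (hval : ¬ HasRaisedValley h (true :: S)) : true :: S = typeMin h v := by
  induction v generalizing h S with
  | nil =>
    rw [hS.eq_replicate_of_upFollowers_eq_nil (c := false) (cons.inj hv).2]
    rfl
  | cons x v ih =>
    simp only [upFollowers_cons_true, cons_append, cons.injEq] at hv
    obtain ⟨hx, hv⟩ := hv
    cases x
    · obtain ⟨q, S, rfl⟩ := exists_eq_replicate_false_append_true_cons
        (true_mem_of_upFollowers_eq_append hv)
      obtain ⟨m, hqm, hm⟩ : ∃ m, h + 1 = q + m ∧ IsWalk m (true :: S) 0 := by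
        simpa [isWalk_append] using hS
      obtain ⟨q, rfl⟩ : ∃ q', q = q' + 1 :=
        Nat.exists_eq_succ_of_ne_zero (by rintro rfl; simp at hx)
      obtain rfl : m = 0 := by
        -- otherwise the first descent stops at height `m > 0`, at a raised valley
        by_contra hm0
        refine hval ⟨true :: replicate q false, S, m - 1, by simp [replicate_succ'], ?_⟩
        rw [cons_append, ← replicate_succ', isWalk_cons_true, isWalk_replicate_false]
        omega
      obtain rfl : h = q := by omega
      rw [typeMin, ih (S := S) (by simpa using hm) (by simpa using hv)
        (fun hd => hval (HasRaisedValley.append_left (X := true :: replicate (h + 1) false)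
          (by simp) hd))]
    · obtain ⟨y, S, rfl⟩ :=
        exists_cons_of_ne_nil (ne_nil_of_mem (true_mem_of_upFollowers_eq_append hv))
      obtain rfl : y = true := by simpa using hx
      rw [typeMin, ih (S := S) (by simpa using hS) (by simpa using hv)
        (fun hd => hval (HasRaisedValley.append_left (X := [true]) (by simp) hd))]

theorem exists_tamariStep_of_infix_ddu {P : List Bool} (hP : IsWalk 0 P 0)
    (hddu : [false, false, true] <:+: P) :
    ∃ Q, TamariStep P Q ∧ upFollowers Q false = upFollowers P false := by
  obtain ⟨X, Y, rfl⟩ := hddu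
  have hsplit : X ++ [false, false, true] ++ Y = (X ++ [false]) ++ false :: true :: Y := by simp
  obtain ⟨m, hY⟩ : ∃ m, IsWalk (m + 1) Y 0 := by
    rw [hsplit, isWalk_append] at hP
    obtain ⟨_ | m, -, hm⟩ := hP
    · simp at hm
    · exact ⟨m, by simpa using hm⟩
  obtain ⟨B, C, rfl, hB, -⟩ := hY.exists_first_passage (Nat.zero_le _)
  have hB' : IsWalk 0 (true :: (B ++ [false])) 0 := by
    simp only [isWalk_cons_true, isWalk_append]
    exact ⟨1, by simpa using hB.lift 1, rfl⟩
  refine ⟨(X ++ [false]) ++ (true :: (B ++ [false]) ++ false :: C),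
    ⟨X ++ [false], true :: (B ++ [false]), C, isDyck_iff_isWalk.mpr hB', by simp, by simp, rfl⟩,
    ?_⟩
  rw [hsplit, ← hB'.upFollowers_rotate_eq (by simp)]
  simp

theorem HasRaisedValley.exists_tamariStep {P : List Bool} (hP : IsWalk 0 P 0)
    (hval : HasRaisedValley 0 P) :
    ∃ P', TamariStep P' P ∧ upFollowers P' false = upFollowers P false := by
  obtain ⟨X, Y, k, rfl, hX⟩ := hval
  have hsplit : X ++ false :: true :: Y = (X ++ [false]) ++ true :: Y := by simp
  have hY : IsWalk (k + 1) (true :: Y) 0 := by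
    rw [hsplit, isWalk_append] at hP
    obtain ⟨a, hXa, ha⟩ := hP
    rwa [hX.right_unique hXa]
  obtain ⟨B, C, hBC, hB, -⟩ := hY.exists_first_passage (Nat.zero_le _)
  have hne : B ≠ [] := by rintro rfl; simp at hBC
  refine ⟨(X ++ [false]) ++ false :: (B ++ C),
    ⟨X ++ [false], B, C, isDyck_iff_isWalk.mpr hB, hne, rfl, by simp [hBC]⟩, ?_⟩
  rw [hsplit, hBC, hB.upFollowers_rotate_eq hne]

def typeFiber (v : List Bool) : Set (List Bool) :=
  {P | IsDyck P ∧ P.count true = v.length + 1 ∧ typeWord P = v}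

theorem mem_typeFiber_iff {v P : List Bool} :
    P ∈ typeFiber v ↔ IsWalk 0 P 0 ∧ upFollowers P false = v ++ [false] := by
  refine ⟨fun ⟨hP, hct, hv⟩ => ⟨isDyck_iff_isWalk.mp hP, (typeWord_eq_iff (by omega)).mp hv⟩,
    fun ⟨hP, hv⟩ => ?_⟩
  have hct : P.count true = v.length + 1 := by simpa using congrArg length hv
  exact ⟨isDyck_iff_isWalk.mpr hP, hct, (typeWord_eq_iff (by omega)).mpr hv⟩

theorem typeMax_mem_typeFiber (v : List Bool) : typeMax 0 v ∈ typeFiber v :=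
  mem_typeFiber_iff.mpr ⟨isWalk_typeMax 0 v, upFollowers_typeMax 0 v⟩

theorem typeMin_mem_typeFiber (v : List Bool) : typeMin 0 v ∈ typeFiber v :=
  mem_typeFiber_iff.mpr ⟨isWalk_typeMin 0 v, upFollowers_typeMin 0 v⟩

theorem exists_tamariStep_mem_typeFiber {v P : List Bool} (hP : P ∈ typeFiber v)
    (hne : P ≠ typeMax 0 v) : ∃ Q ∈ typeFiber v, TamariStep P Q := by
  obtain ⟨hPw, hPv⟩ := mem_typeFiber_iff.mp hP
  obtain ⟨S, rfl⟩ := hPw.exists_eq_true_cons (ne_nil_of_mem (true_mem_of_upFollowers_eq_append hPv))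
  have hddu : [false, false, true] <:+: true :: S :=
    by_contra fun hddu => hne (eq_typeMax (by simpa using hPw) hPv hddu)
  obtain ⟨Q, hPQ, hQ⟩ := exists_tamariStep_of_infix_ddu hPw hddu
  refine ⟨Q, mem_typeFiber_iff.mpr ⟨isDyck_iff_isWalk.mp (hPQ.isDyck_iff.mp hP.1), ?_⟩, hPQ⟩
  rw [hQ, hPv]

theorem exists_tamariStep_to_mem_typeFiber {v P : List Bool} (hP : P ∈ typeFiber v)
    (hne : P ≠ typeMin 0 v) : ∃ P' ∈ typeFiber v, TamariStep P' P := by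
  obtain ⟨hPw, hPv⟩ := mem_typeFiber_iff.mp hP
  obtain ⟨S, rfl⟩ := hPw.exists_eq_true_cons (ne_nil_of_mem (true_mem_of_upFollowers_eq_append hPv))
  have hval : HasRaisedValley 0 (true :: S) :=
    by_contra fun hval => hne (eq_typeMin (by simpa using hPw) hPv hval)
  obtain ⟨P', hP'P, hP'⟩ := hval.exists_tamariStep hPw
  refine ⟨P', mem_typeFiber_iff.mpr ⟨isDyck_iff_isWalk.mp (hP'P.isDyck_iff.mpr hP.1), ?_⟩, hP'P⟩
  rw [hP', hPv]

theorem tamariLe_typeMax {v P : List Bool} (hP : P ∈ typeFiber v) : TamariLe P (typeMax 0 v) :=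
  Relation.reflTransGen_of_exists_decreasing_step (suffixWeight false)
    (fun _ hP hne => let ⟨Q, hQ, hPQ⟩ := exists_tamariStep_mem_typeFiber hP hne
      ⟨Q, hQ, hPQ, hPQ.suffixWeight_lt.2⟩) P hP

theorem typeMin_tamariLe {v P : List Bool} (hP : P ∈ typeFiber v) : TamariLe (typeMin 0 v) P :=
  (Relation.reflTransGen_of_exists_decreasing_step (r := flip TamariStep) (suffixWeight true)
    (fun _ hP hne => let ⟨P', hP', hP'P⟩ := exists_tamariStep_to_mem_typeFiber hP hne
      ⟨P', hP', hP'P, hP'P.suffixWeight_lt.1⟩) P hP).swap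

theorem mem_typeFiber_of_tamariLe {v P : List Bool} (hP : IsDyck P)
    (hmin : TamariLe (typeMin 0 v) P) (hmax : TamariLe P (typeMax 0 v)) : P ∈ typeFiber v := by
  refine mem_typeFiber_iff.mpr ⟨isDyck_iff_isWalk.mp hP, ?_⟩
  have h₁ := hmin.upFollowers_le false
  have h₂ := hmax.upFollowers_le false
  rw [upFollowers_typeMin] at h₁
  rw [upFollowers_typeMax] at h₂
  exact h₂.antisymm h₁

end

/-- The Tamari lattice on Dyck paths of size `n` is partitioned by the type function into
fibers `I(v)` which are intervals: for every word `v` of length `n - 1` there are Dyck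
paths `a ≤ b` of size `n` such that the Dyck paths of type `v` are exactly those between
`a` and `b`. -/
theorem type_fibers_are_intervals (n : ℕ) (hn : 1 ≤ n)
    (v : List Bool) (hv : v.length = n - 1) :
    ∃ a b : List Bool, IsDyck a ∧ a.count true = n ∧ IsDyck b ∧ b.count true = n ∧
      TamariLe a b ∧
      ∀ P : List Bool, IsDyck P → P.count true = n →
        (typeWord P = v ↔ (TamariLe a P ∧ TamariLe P b)) := by
  obtain rfl : n = v.length + 1 := by omega
  obtain ⟨hmin, hmin_count, -⟩ := typeMin_mem_typeFiber v
  obtain ⟨hmax, hmax_count, -⟩ := typeMax_mem_typeFiber v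
  refine ⟨typeMin 0 v, typeMax 0 v, hmin, hmin_count, hmax, hmax_count,
    tamariLe_typeMax (typeMin_mem_typeFiber v), fun P hP hct => ⟨fun hPv => ?_, fun hPv => ?_⟩⟩
  · exact ⟨typeMin_tamariLe ⟨hP, hct, hPv⟩, tamariLe_typeMax ⟨hP, hct, hPv⟩⟩
  · exact (mem_typeFiber_of_tamariLe hP hPv.1 hPv.2).2.2
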